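/- Let X be a reflexive smooth complex Banach space and T ∈ B(X) a normal operator (‖Tx‖ = ‖T'(Jx)‖ for all x). Then T is invertible if and only if T is bounded below; consequently, if T is normal and not invertible, then c(T) = μ(T) = 0. -/

import Mathlib

/-!
A bounded-below operator on a Banach space is injective with closed range, so it is invertible as
soon as its range is dense. If a functional `f` annihilates the range of `T`, write `f = J x`;
normality gives `‖T x‖ = ‖f ∘ T‖ = 0`, so `x = 0` and `f = J 0 = 0`, and the range is dense by
Hahn–Banach. A non-invertible normal `T` is thus not bounded below, which forces `μ(T) = 0`, and
`0 ≤ c(T) ≤ μ(T)` because `‖J x (T x)‖ ≤ ‖T x‖` on the unit sphere.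
-/

/-- The minimum modulus μ(T) = inf{‖Tx‖ : ‖x‖ = 1}. -/
noncomputable def minMod {X : Type*} [NormedAddCommGroup X] [NormedSpace ℂ X]
    (T : X →L[ℂ] X) : ℝ :=
  sInf {r : ℝ | ∃ x : X, ‖x‖ = 1 ∧ r = ‖T x‖}

/-- The Crawford number c(T) = inf{ |J(x)(Tx)| : ‖x‖ = 1 }. -/
noncomputable def crawford {X : Type*} [NormedAddCommGroup X] [NormedSpace ℂ X]
    (J : X → (X →L[ℂ] ℂ)) (T : X →L[ℂ] X) : ℝ :=
  sInf {r : ℝ | ∃ x : X, ‖x‖ = 1 ∧ r = ‖J x (T x)‖}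

theorem Submodule.exists_strongDual_ne_zero_of_isClosed_of_ne_top {𝕜 E : Type*} [RCLike 𝕜]
    [NormedAddCommGroup E] [NormedSpace 𝕜 E] {K : Submodule 𝕜 E} (hK : IsClosed (K : Set E))
    (hne : K ≠ ⊤) : ∃ f : StrongDual 𝕜 E, f ≠ 0 ∧ ∀ y ∈ K, f y = 0 := by
  obtain ⟨x, hx⟩ : ∃ x, x ∉ K := by simpa [Submodule.eq_top_iff'] using hne
  -- `hK` is the instance making `E ⧸ K` a normed space, hence one with a separating dual.
  obtain ⟨g, hg⟩ := SeparatingDual.exists_ne_zero (R := 𝕜)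
    (mt (Submodule.Quotient.mk_eq_zero K).1 hx)
  refine ⟨g.comp K.mkQL, fun h => hg ?_, fun y hy => ?_⟩
  · simpa using DFunLike.congr_fun h x
  · simp [(Submodule.Quotient.mk_eq_zero K).2 hy]

theorem ContinuousLinearMap.range_topologicalClosure_eq_top_of_comp_eq_zero {𝕜 E F : Type*}
    [RCLike 𝕜] [NormedAddCommGroup E] [NormedSpace 𝕜 E] [NormedAddCommGroup F] [NormedSpace 𝕜 F]
    (T : E →L[𝕜] F) (hT : ∀ f : StrongDual 𝕜 F, f.comp T = 0 → f = 0) :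
    T.range.topologicalClosure = ⊤ := by
  by_contra hne
  obtain ⟨f, hf, hfK⟩ := Submodule.exists_strongDual_ne_zero_of_isClosed_of_ne_top
    T.range.isClosed_topologicalClosure hne
  refine hf (hT f (ContinuousLinearMap.ext fun x => hfK _ ?_))
  exact T.range.le_topologicalClosure ⟨x, rfl⟩

theorem ContinuousLinearMap.strongDual_eq_zero_of_comp_eq_zero_of_normal {𝕜 X : Type*} [RCLike 𝕜]
    [NormedAddCommGroup X] [NormedSpace 𝕜 X] (J : X → StrongDual 𝕜 X)
    (hJnorm : ∀ x : X, ‖J x‖ = ‖x‖) (hJsurj : Function.Surjective J) (T : X →L[𝕜] X)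
    (hnormal : ∀ x : X, ‖T x‖ = ‖(J x).comp T‖) (hT : ∃ c > 0, ∀ x : X, c * ‖x‖ ≤ ‖T x‖)
    (f : StrongDual 𝕜 X) (hf : f.comp T = 0) : f = 0 := by
  obtain ⟨K, hK⟩ := antilipschitzWith_iff_exists_mul_le_norm.2 hT
  obtain ⟨x, rfl⟩ := hJsurj f
  have hTx : T x = 0 := norm_eq_zero.1 (by rw [hnormal, hf, norm_zero])
  rw [← norm_eq_zero, hJnorm, norm_eq_zero]
  exact hK.injective (hTx.trans (map_zero T).symm)

section MinimumModulus

variable {X : Type*} [NormedAddCommGroup X] [NormedSpace ℂ X]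

theorem minMod_nonneg (T : X →L[ℂ] X) : 0 ≤ minMod T :=
  Real.sInf_nonneg (by rintro _ ⟨x, -, rfl⟩; exact norm_nonneg _)

theorem crawford_nonneg (J : X → (X →L[ℂ] ℂ)) (T : X →L[ℂ] X) : 0 ≤ crawford J T :=
  Real.sInf_nonneg (by rintro _ ⟨x, -, rfl⟩; exact norm_nonneg _)

theorem minMod_mul_norm_le (T : X →L[ℂ] X) (x : X) : minMod T * ‖x‖ ≤ ‖T x‖ := by
  rcases eq_or_ne x 0 with rfl | hx
  · simp
  have hmem : ‖T ((‖x‖⁻¹ : ℂ) • x)‖ ∈ {r : ℝ | ∃ x : X, ‖x‖ = 1 ∧ r = ‖T x‖} :=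
    ⟨_, norm_smul_inv_norm hx, rfl⟩
  calc minMod T * ‖x‖ ≤ ‖T ((‖x‖⁻¹ : ℂ) • x)‖ * ‖x‖ := by
        gcongr
        exact csInf_le ⟨0, by rintro _ ⟨y, -, rfl⟩; exact norm_nonneg _⟩ hmem
    _ = ‖T x‖ := by
        rw [map_smul, norm_smul, norm_inv, Complex.norm_real, norm_norm]
        field_simp [norm_ne_zero_iff.2 hx]

theorem minMod_eq_zero_of_not_bounded_below (T : X →L[ℂ] X)
    (hT : ¬ ∃ c : ℝ, 0 < c ∧ ∀ x : X, c * ‖x‖ ≤ ‖T x‖) : minMod T = 0 :=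
  (minMod_nonneg T).antisymm' (not_lt.1 fun hpos => hT ⟨_, hpos, minMod_mul_norm_le T⟩)

theorem crawford_le_minMod (J : X → (X →L[ℂ] ℂ)) (hJnorm : ∀ x : X, ‖J x‖ = ‖x‖)
    (T : X →L[ℂ] X) : crawford J T ≤ minMod T := by
  by_cases hX : ∃ x : X, ‖x‖ = 1
  · obtain ⟨x₀, hx₀⟩ := hX
    refine le_csInf ⟨_, x₀, hx₀, rfl⟩ ?_
    rintro _ ⟨x, hx, rfl⟩
    calc crawford J T ≤ ‖J x (T x)‖ :=
          csInf_le ⟨0, by rintro _ ⟨y, -, rfl⟩; exact norm_nonneg _⟩ ⟨x, hx, rfl⟩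
      _ ≤ ‖J x‖ * ‖T x‖ := (J x).le_opNorm (T x)
      _ = ‖T x‖ := by rw [hJnorm, hx, one_mul]
  · -- without unit vectors both infima are `sInf ∅ = 0`
    simp_all [crawford, minMod]

end MinimumModulus

theorem normal_isUnit_iff_bounded_below_general
    {X : Type*} [NormedAddCommGroup X] [NormedSpace ℂ X] [CompleteSpace X]
    (J : X → (X →L[ℂ] ℂ))
    (hJnorm : ∀ x : X, ‖J x‖ = ‖x‖)
    (hJsurj : Function.Surjective J)
    (T : X →L[ℂ] X) (hnormal : ∀ x : X, ‖T x‖ = ‖(J x).comp T‖) :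
    (IsUnit T ↔ ∃ c : ℝ, 0 < c ∧ ∀ x : X, c * ‖x‖ ≤ ‖T x‖) ∧
    (¬ IsUnit T → crawford J T = 0 ∧ minMod T = 0) := by
  have isUnit_iff : IsUnit T ↔ ∃ c : ℝ, 0 < c ∧ ∀ x : X, c * ‖x‖ ≤ ‖T x‖ := by
    rw [T.isUnit_iff_bijective, T.bijective_iff_dense_range_and_antilipschitz,
      antilipschitzWith_iff_exists_mul_le_norm]
    refine ⟨And.right, fun hT => ⟨T.range_topologicalClosure_eq_top_of_comp_eq_zero ?_, hT⟩⟩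
    exact T.strongDual_eq_zero_of_comp_eq_zero_of_normal J hJnorm hJsurj hnormal hT
  refine ⟨isUnit_iff, fun hT => ?_⟩
  have hμ : minMod T = 0 := minMod_eq_zero_of_not_bounded_below T (mt isUnit_iff.2 hT)
  exact ⟨(hμ ▸ crawford_le_minMod J hJnorm T).antisymm (crawford_nonneg J T), hμ⟩

/-- A normal operator (‖Tx‖ = ‖T'(Jx)‖ for all x) on a reflexive
smooth complex Banach space is invertible iff bounded below; consequently a
non-invertible normal operator satisfies c(T) = μ(T) = 0. -/
theorem normal_isUnit_iff_bounded_below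
    {X : Type*} [NormedAddCommGroup X] [NormedSpace ℂ X] [CompleteSpace X]
    (J : X → (X →L[ℂ] ℂ))
    (hJnorm : ∀ x : X, ‖J x‖ = ‖x‖)
    (hJx : ∀ x : X, J x x = (‖x‖ : ℂ) ^ 2)
    (hJsurj : Function.Surjective J)
    (T : X →L[ℂ] X) (hnormal : ∀ x : X, ‖T x‖ = ‖(J x).comp T‖) :
    (IsUnit T ↔ ∃ c : ℝ, 0 < c ∧ ∀ x : X, c * ‖x‖ ≤ ‖T x‖) ∧
    (¬ IsUnit T → crawford J T = 0 ∧ minMod T = 0) :=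
  normal_isUnit_iff_bounded_below_general J hJnorm hJsurj T hnormal
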